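/- In the Lie algebra su(n+1,1), realised as matrices [[λ, −r̄ᵀ, iq],[s, C, r],[ip, −s̄ᵀ, −λ̄]] with C skew-Hermitian (n×n), s, r ∈ ℂⁿ, p, q ∈ ℝ, and tr C + λ − λ̄ = 0, the subset s consisting of matrices [[x + iθ, −h·Ūᵀ, 0],[f·U, M + iθ·Id, h·U],[0, −f·Ūᵀ, −x + iθ]] with M skew-Hermitian, M·U = 0, tr M + (n+2)iθ = 0, and x, θ, f, h ∈ ℝ (U ∈ ℂⁿ a fixed unit vector) is closed under the matrix commutator, i.e. is a real Lie subalgebra. -/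
import Mathlib


open Matrix Complex

/-- The matrix `[[x+iθ, −h·Ūᵀ, 0],[f·U, M+iθ·Id, h·U],[0, −f·Ūᵀ, −x+iθ]]`. -/
def crMat (n : ℕ) (x θ f h : ℝ) (M : Matrix (Fin n) (Fin n) ℂ)
    (U : Fin n → ℂ) :
    Matrix (Fin 1 ⊕ Fin n ⊕ Fin 1) (Fin 1 ⊕ Fin n ⊕ Fin 1) ℂ :=
  Matrix.of fun i j =>
    match i, j with
    | .inl _, .inl _ => (x : ℂ) + (θ : ℂ) * Complex.I
    | .inl _, .inr (.inl j) => -(h : ℂ) * starRingEnd ℂ (U j)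
    | .inl _, .inr (.inr _) => 0
    | .inr (.inl i), .inl _ => (f : ℂ) * U i
    | .inr (.inl i), .inr (.inl j) =>
        M i j + (if i = j then (θ : ℂ) * Complex.I else 0)
    | .inr (.inl i), .inr (.inr _) => (h : ℂ) * U i
    | .inr (.inr _), .inl _ => 0
    | .inr (.inr _), .inr (.inl j) => -(f : ℂ) * starRingEnd ℂ (U j)
    | .inr (.inr _), .inr (.inr _) => -(x : ℂ) + (θ : ℂ) * Complex.I

/-- The symmetry algebra `s ⊂ su(n+1,1)` of a contact distinguished curve in
the flat CR model. -/
def crSymmetryAlgebra (n : ℕ) (U : Fin n → ℂ) :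
    Set (Matrix (Fin 1 ⊕ Fin n ⊕ Fin 1) (Fin 1 ⊕ Fin n ⊕ Fin 1) ℂ) :=
  {A | ∃ (x θ f h : ℝ) (M : Matrix (Fin n) (Fin n) ℂ),
    Mᴴ = -M ∧ M.mulVec U = 0 ∧
    Matrix.trace M + ((n : ℂ) + 2) * ((θ : ℂ) * Complex.I) = 0 ∧
    A = crMat n x θ f h M U}

/-- If `M` is skew-Hermitian and kills `U`, then `Ū` kills `M` on the left. -/
lemma crRowU {n : ℕ} {U : Fin n → ℂ} {M : Matrix (Fin n) (Fin n) ℂ}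
    (hM : Mᴴ = -M) (hMU : M.mulVec U = 0) (j : Fin n) :
    ∑ i, starRingEnd ℂ (U i) * M i j = 0 := by
  have hmv : ∑ i, M j i * U i = 0 := congrFun hMU j
  have hc : ∀ i, M i j = -starRingEnd ℂ (M j i) := by
    intro i
    have h1 := congrFun (congrFun hM j) i
    simp only [Matrix.conjTranspose_apply, Matrix.neg_apply] at h1
    simpa using congrArg star h1
  calc ∑ i, starRingEnd ℂ (U i) * M i j
      = -starRingEnd ℂ (∑ i, M j i * U i) := by
        rw [map_sum, ← Finset.sum_neg_distrib]
        refine Finset.sum_congr rfl fun i _ => ?_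
        rw [hc i, RingHom.map_mul]; ring
    _ = 0 := by rw [hmv, map_zero, neg_zero]

/-- The symmetry algebra of a contact distinguished curve in the flat CR model
is closed under the matrix commutator, i.e. it is a real Lie subalgebra of
`su(n+1,1)`. -/
theorem crSymmetryAlgebra_closed (n : ℕ) (U : Fin n → ℂ)
    (hU : U ⬝ᵥ (fun i => starRingEnd ℂ (U i)) = 1) :
    ∀ A ∈ crSymmetryAlgebra n U, ∀ B ∈ crSymmetryAlgebra n U,
      A * B - B * A ∈ crSymmetryAlgebra n U := by
  rintro A ⟨x, θ, f, h, M, hM, hMU, htr, rfl⟩ B ⟨x', θ', f', h', M', hM', hMU', htr', rfl⟩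
  have hU1 : ∑ i, U i * starRingEnd ℂ (U i) = 1 := hU
  -- generic sum computations
  have sUU : ∀ a b : ℂ, ∑ k, a * starRingEnd ℂ (U k) * (b * U k) = a * b := by
    intro a b
    calc ∑ k, a * starRingEnd ℂ (U k) * (b * U k)
        = a * b * ∑ k, U k * starRingEnd ℂ (U k) := by
          rw [Finset.mul_sum]; exact Finset.sum_congr rfl fun k _ => by ring
      _ = a * b := by rw [hU1, mul_one]
  have sMU : ∀ (N : Matrix (Fin n) (Fin n) ℂ), N.mulVec U = 0 →
      ∀ (a : ℂ) (i : Fin n), ∑ k, N i k * (a * U k) = 0 := by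
    intro N hN a i
    calc ∑ k, N i k * (a * U k) = a * ∑ k, N i k * U k := by
          rw [Finset.mul_sum]; exact Finset.sum_congr rfl fun k _ => by ring
      _ = 0 := by
          have h0 : ∑ k, N i k * U k = 0 := congrFun hN i
          rw [h0, mul_zero]
  have sUM : ∀ (N : Matrix (Fin n) (Fin n) ℂ), Nᴴ = -N → N.mulVec U = 0 →
      ∀ (a : ℂ) (j : Fin n), ∑ k, a * starRingEnd ℂ (U k) * N k j = 0 := by
    intro N h1 h2 a j
    calc ∑ k, a * starRingEnd ℂ (U k) * N k j
        = a * ∑ k, starRingEnd ℂ (U k) * N k j := by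
          rw [Finset.mul_sum]; exact Finset.sum_congr rfl fun k _ => by ring
      _ = 0 := by rw [crRowU h1 h2 j, mul_zero]
  refine ⟨f * h' - f' * h, 0, x' * f - x * f', x * h' - x' * h, M * M' - M' * M,
    ?_, ?_, ?_, ?_⟩
  · rw [conjTranspose_sub, conjTranspose_mul, conjTranspose_mul, hM, hM']
    simp [mul_comm]
  · rw [Matrix.sub_mulVec, ← Matrix.mulVec_mulVec, ← Matrix.mulVec_mulVec,
      hMU, hMU', Matrix.mulVec_zero, Matrix.mulVec_zero, sub_zero]
  · simp [Matrix.trace_sub, Matrix.trace_mul_comm M M']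
  · ext i j
    rcases i with i | i | i <;> rcases j with j | j | j <;>
      simp only [crMat, Matrix.sub_apply, Matrix.mul_apply, Fintype.sum_sum_type,
        Fin.sum_univ_one, Matrix.of_apply, mul_add, add_mul, mul_ite, ite_mul,
        mul_zero, zero_mul, Finset.sum_add_distrib, Finset.sum_ite_eq,
        Finset.sum_ite_eq', Finset.mem_univ, if_true, Complex.ofReal_zero,
        ite_self, Complex.ofReal_sub, Complex.ofReal_mul]
    all_goals first
      | (rw [sUU, sUU]; push_cast; ring1)
      | (rw [sUM M' hM' hMU', sUM M hM hMU]; push_cast; ring1)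
      | (rw [sMU M hMU, sMU M' hMU']; push_cast; ring1)
      | ring1
      | (split_ifs <;> ring1)
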